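/- Let μ(t) := vec(M(t)) − 𝒦·vec(ω(t)ω(t)ᵀ), where M satisfies the matrix ODE vec(Ṁ) = 𝒜·vec(M) + ℬ·vec(ωωᵀ), ω satisfies ω̇ = Sω, and 𝒦 solves 𝒜𝒦 + ℬ = 𝒦𝒮 with 𝒮 = I ⊗ S + S ⊗ I. Then μ satisfies the linear ODE μ̇ = 𝒜 μ. Consequently, if all eigenvalues of 𝒜 have negative real part, μ(t) → 0 exponentially as t → ∞, i.e. vec(M(t)) converges to 𝒦·vec(ω(t)ω(t)ᵀ). -/

import Mathlib

/-!
Differentiating `vec (ω ωᵀ)` gives `vec (S ω ωᵀ + ω ωᵀ Sᵀ) = 𝒮 vec (ω ωᵀ)`, and the Sylvester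
relation `𝒜𝒦 + ℬ = 𝒦𝒮` makes the forcing terms cancel in `μ̇`, leaving `μ̇ = 𝒜μ`.
For the decay, complexify: `μ(t) = exp(t𝒜) μ(0)` by uniqueness of solutions, and `μ(0)` splits
into generalized eigenvectors of `𝒜`. On the generalized eigenspace of `λ`, `exp(t𝒜)` is
`e^{tλ}` times a polynomial in `t`, which is `O(e^{(Re λ + ε) t})` for every `ε > 0`.
-/

open Matrix Kronecker NormedSpace Nat Finset

section SylvesterODE

variable {𝕜 : Type*} [NontriviallyNormedField 𝕜]

theorem hasDerivAt_vec_vecMulVec_self {ι : Type*} [Fintype ι] [DecidableEq ι]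
    {S : Matrix ι ι 𝕜} {ω : 𝕜 → ι → 𝕜} {t : 𝕜} (hω : HasDerivAt ω (S *ᵥ ω t) t) :
    HasDerivAt (fun s => vec (vecMulVec (ω s) (ω s)))
      ((1 ⊗ₖ S + S ⊗ₖ 1) *ᵥ vec (vecMulVec (ω t) (ω t))) t := by
  have hX : HasDerivAt (fun s => vec (vecMulVec (ω s) (ω s)))
      (vec (vecMulVec (S *ᵥ ω t) (ω t) + vecMulVec (ω t) (S *ᵥ ω t))) t :=
    hasDerivAt_pi.2 fun p =>
      ((hasDerivAt_pi.1 hω p.2).fun_mul (hasDerivAt_pi.1 hω p.1)).congr_deriv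
        (by simp only [vec, Matrix.add_apply, vecMulVec_apply])
  simpa only [add_mulVec, kronecker_mulVec_vec, transpose_one, Matrix.mul_one, Matrix.one_mul,
    one_mulVec, mul_vecMulVec, vecMulVec_mul, vecMul_transpose, vec_add] using hX

theorem hasDerivAt_sub_mulVec_of_mul_add_eq_mul [CompleteSpace 𝕜] {m k : Type*} [Fintype m]
    [Fintype k] {A : Matrix m m 𝕜} {B K : Matrix m k 𝕜} {S : Matrix k k 𝕜}
    (hK : A * K + B = K * S) {v : 𝕜 → m → 𝕜} {q : 𝕜 → k → 𝕜} {t : 𝕜}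
    (hv : HasDerivAt v (A *ᵥ v t + B *ᵥ q t) t) (hq : HasDerivAt q (S *ᵥ q t) t) :
    HasDerivAt (fun s => v s - K *ᵥ q s) (A *ᵥ (v t - K *ᵥ q t)) t := by
  have hKq : HasDerivAt (fun s => K *ᵥ q s) (K *ᵥ (S *ᵥ q t)) t :=
    (mulVecLin K).toContinuousLinearMap.hasFDerivAt.comp_hasDerivAt t hq
  refine (hv.fun_sub hKq).congr_deriv ?_
  rw [mulVec_mulVec, ← hK, add_mulVec, mulVec_sub, mulVec_mulVec]
  abel

end SylvesterODE

def DecaysExponentially {E : Type*} [Norm E] (f : ℝ → E) : Prop :=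
  ∃ c > (0 : ℝ), ∃ C : ℝ, ∀ t ≥ (0 : ℝ), ‖f t‖ ≤ C * Real.exp (-c * t)

namespace DecaysExponentially

variable {E : Type*} [SeminormedAddCommGroup E]

theorem zero : DecaysExponentially fun _ : ℝ => (0 : E) :=
  ⟨1, one_pos, 0, fun t _ => by simp⟩

theorem add {f g : ℝ → E} (hf : DecaysExponentially f) (hg : DecaysExponentially g) :
    DecaysExponentially (f + g) := by
  obtain ⟨c, hc, C, hC⟩ := hf
  obtain ⟨d, hd, D, hD⟩ := hg
  have hC0 : 0 ≤ C := by simpa using (norm_nonneg _).trans (hC 0 le_rfl)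
  have hD0 : 0 ≤ D := by simpa using (norm_nonneg _).trans (hD 0 le_rfl)
  refine ⟨min c d, lt_min hc hd, C + D, fun t ht => ?_⟩
  calc ‖f t + g t‖ ≤ ‖f t‖ + ‖g t‖ := norm_add_le _ _
    _ ≤ C * Real.exp (-c * t) + D * Real.exp (-d * t) := add_le_add (hC t ht) (hD t ht)
    _ ≤ C * Real.exp (-min c d * t) + D * Real.exp (-min c d * t) := by
      gcongr
      exacts [min_le_left c d, min_le_right c d]
    _ = (C + D) * Real.exp (-min c d * t) := by ring

theorem sum {ι : Type*} (s : Finset ι) {f : ι → ℝ → E}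
    (hf : ∀ i ∈ s, DecaysExponentially (f i)) :
    DecaysExponentially fun t => ∑ i ∈ s, f i t := by
  classical
  induction s using Finset.induction_on with
  | empty => simpa using zero
  | insert i s hi ih =>
    simp only [Finset.sum_insert hi]
    exact (hf i (mem_insert_self i s)).add (ih fun j hj => hf j (mem_insert_of_mem hj))

end DecaysExponentially

theorem pow_div_factorial_le_exp_mul_div_pow {t ε : ℝ} (ht : 0 ≤ t) (hε : 0 < ε) (j : ℕ) :
    t ^ j / j ! ≤ Real.exp (ε * t) / ε ^ j := by
  have h := Real.pow_div_factorial_le_exp (x := ε * t) (mul_nonneg hε.le ht) j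
  rw [mul_pow, mul_div_assoc] at h
  rwa [le_div_iff₀' (pow_pos hε j)]

section LinearODE

variable {V : Type*} [NormedAddCommGroup V] [NormedSpace ℂ V] [CompleteSpace V]

theorem hasDerivAt_exp_ofReal_smul_apply (T : V →L[ℂ] V) (x : V) (t : ℝ) :
    HasDerivAt (fun s : ℝ => exp ((s : ℂ) • T) x) (T (exp ((t : ℂ) • T) x)) t := by
  simpa [Function.comp_def] using ((ContinuousLinearMap.apply ℂ V x).hasFDerivAt.comp_hasDerivAt _
    (hasDerivAt_exp_smul_const' T (t : ℂ))).scomp t Complex.ofRealCLM.hasDerivAt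

theorem eq_exp_ofReal_smul_apply_of_hasDerivAt (T : V →L[ℂ] V) {y : ℝ → V}
    (hy : ∀ t, HasDerivAt y (T (y t)) t) (t : ℝ) : y t = exp ((t : ℂ) • T) (y 0) :=
  congrFun (ODE_solution_unique_univ (v := fun _ => T) (s := fun _ => Set.univ) (t₀ := 0)
    (fun _ => T.lipschitz.lipschitzOnWith) (fun t => ⟨hy t, trivial⟩)
    (fun t => ⟨hasDerivAt_exp_ofReal_smul_apply T _ t, trivial⟩) (by simp)) t

theorem exp_smul_apply_eq_sum_of_pow_apply_eq_zero (N : V →L[ℂ] V) (z : ℂ) {k : ℕ} {x : V}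
    (hx : (N ^ k) x = 0) :
    exp (z • N) x = ∑ j ∈ range k, (z ^ j / j !) • (N ^ j) x := by
  have hterm : ∀ j, ((j !⁻¹ : ℂ) • (z • N) ^ j) x = (z ^ j / j !) • (N ^ j) x := fun j => by
    rw [smul_pow, _root_.smul_apply, _root_.smul_apply, smul_smul, inv_mul_eq_div]
  have hvanish : ∀ j ∉ range k, (z ^ j / j !) • (N ^ j) x = 0 := fun j hj => by
    obtain ⟨i, rfl⟩ := Nat.exists_eq_add_of_le' (not_lt.1 (mem_range.not.1 hj))
    rw [pow_add N, mul_apply_eq_comp, hx, map_zero, smul_zero]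
  have hsum := (ContinuousLinearMap.apply ℂ V x).map_tsum (expSeries_summable' (𝕂 := ℂ) (z • N))
  simp only [ContinuousLinearMap.apply_apply, hterm] at hsum
  rw [congrFun (exp_eq_tsum ℂ) (z • N), hsum]
  exact tsum_eq_sum hvanish

theorem exp_smul_eq_exp_mul_smul_exp_smul_sub (T : V →L[ℂ] V) (z lam : ℂ) :
    exp (z • T) = Complex.exp (z * lam) • exp (z • (T - lam • 1)) := by
  have hsplit : z • T = algebraMap ℂ _ (z * lam) + z • (T - lam • 1) := by
    rw [Algebra.algebraMap_eq_smul_one, smul_sub, smul_smul]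
    abel
  rw [hsplit, exp_add_of_commute_of_mem_ball (𝕂 := ℂ) (Algebra.commute_algebraMap_left _ _)
    (by simp [expSeries_radius_eq_top]) (by simp [expSeries_radius_eq_top]),
    ← algebraMap_exp_comm, ← Algebra.smul_def, Complex.exp_eq_exp_ℂ]

theorem exists_norm_exp_ofReal_smul_apply_le (T : V →L[ℂ] V) {lam : ℂ} {k : ℕ} {x : V}
    (hx : ((T - lam • 1) ^ k) x = 0) {ε : ℝ} (hε : 0 < ε) :
    ∃ C, ∀ t ≥ (0 : ℝ), ‖exp ((t : ℂ) • T) x‖ ≤ C * Real.exp ((lam.re + ε) * t) := by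
  set N := T - lam • (1 : V →L[ℂ] V)
  refine ⟨∑ j ∈ range k, ‖(N ^ j) x‖ / ε ^ j, fun t ht => ?_⟩
  have hnorm : ‖Complex.exp ((t : ℂ) * lam)‖ = Real.exp (lam.re * t) := by
    rw [Complex.norm_exp, Complex.re_ofReal_mul, mul_comm]
  rw [exp_smul_eq_exp_mul_smul_exp_smul_sub T _ lam, _root_.smul_apply, norm_smul,
    hnorm, exp_smul_apply_eq_sum_of_pow_apply_eq_zero N _ hx]
  calc Real.exp (lam.re * t) * ‖∑ j ∈ range k, ((t : ℂ) ^ j / j !) • (N ^ j) x‖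
      ≤ Real.exp (lam.re * t) * ∑ j ∈ range k, t ^ j / j ! * ‖(N ^ j) x‖ := by
        gcongr
        refine (norm_sum_le _ _).trans (sum_le_sum fun j _ => ?_)
        rw [norm_smul, norm_div, norm_pow, Complex.norm_real, Complex.norm_natCast,
          Real.norm_of_nonneg ht]
    _ ≤ Real.exp (lam.re * t) * ∑ j ∈ range k, Real.exp (ε * t) / ε ^ j * ‖(N ^ j) x‖ := by
        gcongr _ * ∑ j ∈ _, ?_ * _ with j
        exact pow_div_factorial_le_exp_mul_div_pow ht hε j
    _ = (∑ j ∈ range k, ‖(N ^ j) x‖ / ε ^ j) * Real.exp ((lam.re + ε) * t) := by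
        rw [add_mul, Real.exp_add, mul_sum, sum_mul]
        refine sum_congr rfl fun j _ => ?_
        ring

theorem decaysExponentially_exp_ofReal_smul_apply [FiniteDimensional ℂ V] (T : V →L[ℂ] V)
    (hT : ∀ lam, Module.End.HasEigenvalue (T : Module.End ℂ V) lam → lam.re < 0) (x : V) :
    DecaysExponentially fun t : ℝ => exp ((t : ℂ) • T) x := by
  obtain ⟨d, hd, rfl⟩ : ∃ d : ℂ →₀ V,
      (∀ lam, d lam ∈ Module.End.maxGenEigenspace (T : Module.End ℂ V) lam) ∧
        d.sum (fun _ y => y) = x := by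
    rw [← Submodule.mem_iSup_iff_exists_finsupp, Module.End.iSup_maxGenEigenspace_eq_top]
    trivial
  simp only [Finsupp.sum, map_sum]
  refine DecaysExponentially.sum _ fun lam hlam => ?_
  obtain ⟨k, hk⟩ := (Module.End.mem_maxGenEigenspace _ _ _).1 (hd lam)
  have hre : lam.re < 0 := by
    refine hT lam (Module.End.hasEigenvalue_of_hasGenEigenvalue (k := k) ?_)
    rw [Module.End.hasGenEigenvalue_iff, Submodule.ne_bot_iff]
    exact ⟨d lam, by simpa [Module.End.mem_genEigenspace_nat] using hk,
      Finsupp.mem_support_iff.1 hlam⟩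
  rw [← ContinuousLinearMap.toLinearMap_one, ← ContinuousLinearMap.toLinearMap_smul,
    ← ContinuousLinearMap.toLinearMap_sub, ← ContinuousLinearMap.toLinearMap_pow] at hk
  obtain ⟨C, hC⟩ := exists_norm_exp_ofReal_smul_apply_le T hk (ε := -lam.re / 2) (by linarith)
  exact ⟨-lam.re / 2, by linarith, C, fun t ht => (hC t ht).trans_eq (by ring_nf)⟩

end LinearODE

theorem Matrix.decaysExponentially_of_hasDerivAt_mulVec {ι : Type*} [Fintype ι] [DecidableEq ι]
    (A : Matrix ι ι ℝ) (hA : ∀ z ∈ spectrum ℂ (A.map Complex.ofReal), z.re < 0)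
    {μ : ℝ → ι → ℝ} (hμ : ∀ t, HasDerivAt μ (A *ᵥ μ t) t) : DecaysExponentially μ := by
  set T := (toLin' (A.map Complex.ofReal)).toContinuousLinearMap
  set y : ℝ → ι → ℂ := fun t p => μ t p
  have hy : ∀ t, HasDerivAt y (T (y t)) t := fun t => hasDerivAt_pi.2 fun p =>
    (hasDerivAt_pi.1 (hμ t) p).ofReal_comp.congr_deriv (by simp [T, y, mulVec, dotProduct])
  have hT : ∀ lam, Module.End.HasEigenvalue (T : Module.End ℂ (ι → ℂ)) lam → lam.re < 0 :=
    fun lam h => hA lam (by rwa [Module.End.hasEigenvalue_iff_mem_spectrum,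
      LinearMap.coe_toContinuousLinearMap, spectrum_toLin'] at h)
  obtain ⟨c, hc, C, hC⟩ := decaysExponentially_exp_ofReal_smul_apply T hT (y 0)
  refine ⟨c, hc, C, fun t ht => ?_⟩
  have hnorm : ‖μ t‖ = ‖y t‖ := by simp [y, Pi.norm_def, Complex.nnnorm_real]
  rw [hnorm, eq_exp_ofReal_smul_apply_of_hasDerivAt T hy t]
  exact hC t ht

/-- If `vec M` solves `d/dt vec M = 𝒜 vec M + ℬ vec(ωωᵀ)`, `ω̇ = Sω`, and `𝒦` solves
`𝒜𝒦 + ℬ = 𝒦𝒮` with `𝒮 = I ⊗ S + S ⊗ I`, then `μ := vec M − 𝒦 vec(ωωᵀ)` satisfies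
`μ̇ = 𝒜μ`; if moreover `𝒜` is Hurwitz, `μ(t) → 0` exponentially as `t → ∞`. -/
theorem stmt_4 {n ν : ℕ}
    (cA : Matrix (Fin n × Fin n) (Fin n × Fin n) ℝ)
    (cB : Matrix (Fin n × Fin n) (Fin ν × Fin ν) ℝ)
    (S : Matrix (Fin ν) (Fin ν) ℝ)
    (cS : Matrix (Fin ν × Fin ν) (Fin ν × Fin ν) ℝ)
    (hS : cS = (1 : Matrix (Fin ν) (Fin ν) ℝ) ⊗ₖ S + S ⊗ₖ (1 : Matrix (Fin ν) (Fin ν) ℝ))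
    (K : Matrix (Fin n × Fin n) (Fin ν × Fin ν) ℝ)
    (hK : cA * K + cB = K * cS)
    (v : ℝ → (Fin n × Fin n) → ℝ)  -- v = vec M
    (ω : ℝ → Fin ν → ℝ)
    (q : ℝ → (Fin ν × Fin ν) → ℝ)  -- q = vec (ω ωᵀ)
    (hq : ∀ t p, q t p = ω t p.2 * ω t p.1)
    (hω : ∀ t, HasDerivAt ω (S.mulVec (ω t)) t)
    (hv : ∀ t, HasDerivAt v (cA.mulVec (v t) + cB.mulVec (q t)) t)
    (μ : ℝ → (Fin n × Fin n) → ℝ)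
    (hμ : ∀ t, μ t = v t - K.mulVec (q t)) :
    (∀ t, HasDerivAt μ (cA.mulVec (μ t)) t) ∧
    ((∀ z ∈ spectrum ℂ (cA.map Complex.ofReal), z.re < 0) →
      ∃ c > (0 : ℝ), ∃ Cst : ℝ, ∀ t ≥ (0 : ℝ), ‖μ t‖ ≤ Cst * Real.exp (-c * t)) := by
  have hq_vec : q = fun t => vec (vecMulVec (ω t) (ω t)) := by
    ext t p
    simp [hq, vecMulVec_apply]
  have hμ_deriv : ∀ t, HasDerivAt μ (cA *ᵥ μ t) t := by
    intro t
    rw [funext hμ]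
    subst hq_vec hS
    exact hasDerivAt_sub_mulVec_of_mul_add_eq_mul hK (hv t) (hasDerivAt_vec_vecMulVec_self (hω t))
  exact ⟨hμ_deriv, fun hspec => cA.decaysExponentially_of_hasDerivAt_mulVec hspec hμ_deriv⟩
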